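/- Let K be a commutative ring with ℚ ⊆ K, and let F be the free group on two generators with completed group ring identified, via a group-like expansion, with the ring K⟨⟨X,Y⟩⟩ of noncommutative formal power series. Let X*Y denote the Hausdorff (Baker–Campbell–Hausdorff) series. If z, b, c ∈ K satisfy z·(X*(−Y)) + bX + c·(X*Y) = 0 in K⟨⟨X,Y⟩⟩, then z = 0 (and hence b = c = 0). -/

import Mathlib

/-! We model the completed free associative algebra `K⟨⟨X,Y⟩⟩` (the completed
tensor algebra on two generators) concretely: an element is a function
assigning to each word in the alphabet `Fin 2` its coefficient.  Addition and
scalar multiplication are pointwise, and multiplication is the convolution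
over splittings of a word.  The exponential and logarithm are given by the
usual componentwise-convergent series, and the Hausdorff
(Baker–Campbell–Hausdorff) series is `X*Y := log(exp X · exp Y)`, the unique
(Lie) series with `exp(X*Y) = exp(X)exp(Y)`. -/

/-- The completed tensor algebra on the free module with basis `ι`,
coefficients in `K`. -/
abbrev NCSeries (ι K : Type*) := List ι → K

variable {ι K : Type*} [CommRing K] [Algebra ℚ K]

/-- The unit of `K⟨⟨X,Y⟩⟩`. -/
def oneNC : NCSeries ι K := fun w =>
  match w with
  | [] => 1
  | _ => 0

/-- The multiplication of `K⟨⟨X,Y⟩⟩`. -/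
def mulNC (f g : NCSeries ι K) : NCSeries ι K := fun w =>
  ∑ k ∈ Finset.range (w.length + 1), f (w.take k) * g (w.drop k)

/-- Powers. -/
def pwNC (X : NCSeries ι K) : ℕ → NCSeries ι K
  | 0 => oneNC
  | n + 1 => mulNC X (pwNC X n)

/-- The exponential `exp f = Σₙ fⁿ/n!` of an element with vanishing constant
term (the series is then componentwise finite). -/
def expNC (f : NCSeries ι K) : NCSeries ι K := fun w =>
  ∑ n ∈ Finset.range (w.length + 1),
    algebraMap ℚ K (1 / (Nat.factorial n)) * pwNC f n w

/-- The logarithm `log u = Σ_{n≥1} (−1)^{n−1}(u−1)ⁿ/n` of an element with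
constant term `1` (the series is then componentwise finite). -/
def logNC (u : NCSeries ι K) : NCSeries ι K := fun w =>
  ∑ n ∈ Finset.Icc 1 w.length,
    algebraMap ℚ K ((-1) ^ (n + 1) / n) * pwNC (u - oneNC) n w

/-- The Hausdorff (Baker–Campbell–Hausdorff) series
`f * g = log(exp f · exp g)`. -/
def hausdorffNC (f g : NCSeries ι K) : NCSeries ι K :=
  logNC (mulNC (expNC f) (expNC g))

/-- The generator `X` (resp. `Y`) of `K⟨⟨X,Y⟩⟩` for `i = 0` (resp. `i = 1`). -/
def genNC (i : Fin 2) : NCSeries (Fin 2) K := fun w =>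
  match w with
  | [j] => if j = i then 1 else 0
  | _ => 0

/-! Compare the coefficients of `X`, `Y` and `YYX` in the relation.  The Hausdorff series
`X*(eY)` has coefficients `1`, `e` and `e²/12` there, so the relation gives
`z + b + c = 0`, `c - z = 0` and `(z + c)/12 = 0`; since `2` is invertible in `K`, `z = 0`. -/

theorem mulNC_smul_genNC_nil {R : Type*} [CommRing R] (e : R) (i : Fin 2)
    (f : NCSeries (Fin 2) R) : mulNC (e • genNC i) f [] = 0 := by
  simp [mulNC, genNC]

theorem mulNC_smul_genNC_cons {R : Type*} [CommRing R] (e : R) (i a : Fin 2)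
    (w : List (Fin 2)) (f : NCSeries (Fin 2) R) :
    mulNC (e • genNC i) f (a :: w) = (if a = i then e else 0) * f w := by
  rw [mulNC, Finset.sum_range_succ', Finset.sum_eq_single 0]
  · simp [genNC]
  · intro k _ hk
    obtain ⟨k, rfl⟩ := Nat.exists_eq_succ_of_ne_zero hk
    cases w <;> simp_all [genNC]
  · simp

theorem pwNC_smul_genNC_apply {R : Type*} [CommRing R] (e : R) (i : Fin 2) (n : ℕ)
    (w : List (Fin 2)) :
    pwNC (e • genNC i) n w = if w = List.replicate n i then e ^ n else 0 := by
  induction n generalizing w with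
  | zero => cases w <;> simp [pwNC, oneNC]
  | succ n ih =>
    cases w with
    | nil => simp [pwNC, mulNC_smul_genNC_nil]
    | cons a w =>
      rw [pwNC, mulNC_smul_genNC_cons, ih]
      by_cases ha : a = i <;> by_cases hw : w = List.replicate n i <;>
        simp [ha, hw, pow_succ', List.replicate_succ]

theorem expNC_smul_genNC_apply (e : K) (i : Fin 2) (w : List (Fin 2)) :
    expNC (e • genNC i) w =
      if w = List.replicate w.length i then
        algebraMap ℚ K (1 / w.length.factorial) * e ^ w.length
      else 0 := by
  rw [expNC, Finset.sum_eq_single w.length]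
  · simp [pwNC_smul_genNC_apply]
  · intro n _ hn
    rw [pwNC_smul_genNC_apply, if_neg, mul_zero]
    rintro rfl
    simp at hn
  · simp

theorem logNC_apply_singleton (u : NCSeries ι K) (x : ι) : logNC u [x] = u [x] := by
  simp [logNC, pwNC, mulNC, oneNC, Finset.sum_range_succ]

theorem logNC_apply_triple (u : NCSeries ι K) (h : u [] = 1) (x y z : ι) :
    logNC u [x, y, z] =
      u [x, y, z] - algebraMap ℚ K (1 / 2) * (u [x] * u [y, z] + u [x, y] * u [z])
        + algebraMap ℚ K (1 / 3) * (u [x] * u [y] * u [z]) := by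
  norm_num [logNC, pwNC, mulNC, oneNC, Finset.sum_range_succ, Finset.sum_Icc_succ_top, h]
  ring

section

variable (a e : K)

theorem hausdorffNC_smul_genNC_apply_X :
    hausdorffNC (a • genNC 0) (e • genNC 1 : NCSeries (Fin 2) K) [0] = a := by
  simp [hausdorffNC, logNC_apply_singleton, mulNC, expNC_smul_genNC_apply, Finset.sum_range_succ]

theorem hausdorffNC_smul_genNC_apply_Y :
    hausdorffNC (a • genNC 0) (e • genNC 1 : NCSeries (Fin 2) K) [1] = e := by
  simp [hausdorffNC, logNC_apply_singleton, mulNC, expNC_smul_genNC_apply, Finset.sum_range_succ]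

theorem hausdorffNC_smul_genNC_apply_YYX :
    12 * hausdorffNC (a • genNC 0) (e • genNC 1 : NCSeries (Fin 2) K) [1, 1, 0] = a * e ^ 2 := by
  -- In `exp X · exp (eY)` every `X` precedes every `Y`, so only the products `YY·X` and `Y·Y·X`
  -- contribute to the `YYX`-coefficient of the logarithm: `-(1/2)(e²/2)a + (1/3)e²a = ae²/12`.
  set u := mulNC (expNC (a • genNC 0)) (expNC (e • genNC 1 : NCSeries (Fin 2) K))
  have u_nil : u [] = 1 := by simp [u, mulNC, expNC_smul_genNC_apply]
  have u_X : u [0] = a := by simp [u, mulNC, expNC_smul_genNC_apply, Finset.sum_range_succ]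
  have u_Y : u [1] = e := by simp [u, mulNC, expNC_smul_genNC_apply, Finset.sum_range_succ]
  have u_YX : u [1, 0] = 0 := by simp [u, mulNC, expNC_smul_genNC_apply, Finset.sum_range_succ]
  have u_YY : u [1, 1] = algebraMap ℚ K (1 / 2) * e ^ 2 := by
    simp [u, mulNC, expNC_smul_genNC_apply, Finset.sum_range_succ]
  have u_YYX : u [1, 1, 0] = 0 := by
    simp [u, mulNC, expNC_smul_genNC_apply, Finset.sum_range_succ]
  have h12 : (12 : K) * (algebraMap ℚ K (1 / 3) - algebraMap ℚ K (1 / 2) * algebraMap ℚ K (1 / 2))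
      = 1 := by
    rw [← map_ofNat (algebraMap ℚ K) 12, ← map_mul, ← map_sub, ← map_mul]
    norm_num
  rw [hausdorffNC, logNC_apply_triple u u_nil, u_X, u_Y, u_YX, u_YY, u_YYX]
  linear_combination (a * e ^ 2) * h12

end

/-- let `K ⊇ ℚ` be a commutative ring, and identify the completed
group ring of the free group on two generators with `K⟨⟨X,Y⟩⟩` via a group-like
expansion.  If `z, b, c ∈ K` satisfy `z·(X*(−Y)) + bX + c·(X*Y) = 0` in
`K⟨⟨X,Y⟩⟩`, where `*` denotes the Hausdorff series, then `z = 0` (and hence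
`b = c = 0`). -/
theorem bch_relation_forces_zero (z b c : K)
    (h : z • hausdorffNC (genNC 0) (-genNC 1) + b • (genNC 0 : NCSeries (Fin 2) K)
        + c • hausdorffNC (genNC 0) (genNC 1) = 0) :
    z = 0 ∧ b = 0 ∧ c = 0 := by
  have mX := hausdorffNC_smul_genNC_apply_X (1 : K) (-1)
  have mY := hausdorffNC_smul_genNC_apply_Y (1 : K) (-1)
  have mYYX := hausdorffNC_smul_genNC_apply_YYX (1 : K) (-1)
  have pX := hausdorffNC_smul_genNC_apply_X (1 : K) 1
  have pY := hausdorffNC_smul_genNC_apply_Y (1 : K) 1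
  have pYYX := hausdorffNC_smul_genNC_apply_YYX (1 : K) 1
  simp only [one_smul, neg_one_smul] at mX mY mYYX pX pY pYYX
  have h0 := congrFun h [0]
  have h1 := congrFun h [1]
  have h3 := congrFun h [1, 1, 0]
  simp only [Pi.add_apply, Pi.smul_apply, Pi.zero_apply, smul_eq_mul, genNC, Fin.isValue,
    one_ne_zero, ↓reduceIte, mX, mY, pX, pY, mul_one, mul_neg, mul_zero, add_zero] at h0 h1 h3
  have h2z : 2 * z = 0 := by linear_combination 12 * h3 - z * mYYX - c * pYYX - h1
  have hz : z = 0 := by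
    have h2 : IsUnit (2 : K) := by
      simpa only [map_ofNat] using (two_ne_zero : (2 : ℚ) ≠ 0).isUnit.map (algebraMap ℚ K)
    exact h2.mul_right_eq_zero.1 h2z
  refine ⟨hz, ?_, ?_⟩
  · linear_combination h0 - h1 - 2 * hz
  · linear_combination h1 + hz
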